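/- Fix n ∈ ℕ and a sequence (U_i)_{i≥0} of subsets of {1,…,n}, with the reset functions and the cycle-completion relation defined as in the context. Then for every i ≥ 0 and every subset A of {1,…,n}: A is reset at stage i (i.e., reset_A(i+1) = i via the first clause of the recursion) if and only if A ⊆ V_i. -/

import Mathlib

-- `resetAux n U i A` is the integer `reset_A(i)` of the paper: `reset_A(0) = -1`, and
-- `reset_A(i+1) = i` if some `B ⊆ {1,…,n}` with `B ⊇ A` completes a cycle at stage `i`
-- (i.e. `⋃_{reset_B(i) < h ≤ i} U_h = B`), and `reset_A(i+1) = reset_A(i)` otherwise.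
open Classical in
noncomputable def resetAux (n : ℕ) (U : ℕ → Finset ℕ) : ℕ → Finset ℕ → ℤ
  | 0 => fun _ => -1
  | i + 1 => fun A =>
      if ∃ B, B ⊆ Finset.Icc 1 n ∧ A ⊆ B ∧
          ((Finset.range (i + 1)).filter
            (fun h : ℕ => resetAux n U i B < (h : ℤ))).biUnion U = B
      then (i : ℤ)
      else resetAux n U i A

/-- `B` completes a cycle at stage `i`: `⋃_{reset_B(i) < h ≤ i} U_h = B`. -/
def CompletesCycle (n : ℕ) (U : ℕ → Finset ℕ) (i : ℕ) (B : Finset ℕ) : Prop :=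
  ((Finset.range (i + 1)).filter (fun h : ℕ => resetAux n U i B < (h : ℤ))).biUnion U = B

/-- `V_i := ⋃_{reset_{U_i}(i) < h ≤ i} U_h`. -/
noncomputable def V (n : ℕ) (U : ℕ → Finset ℕ) (i : ℕ) : Finset ℕ :=
  ((Finset.range (i + 1)).filter (fun h : ℕ => resetAux n U i (U i) < (h : ℤ))).biUnion U

/-!
By the recursion, `reset_A(i)` is the last stage `j < i` at which `A` is reset (or `-1`). So
once the claim is known below `i`, `reset_A(i)` is the largest `j < i` with `A ⊆ V_j`. The
induction carries two further facts about `ρ_i := reset_{U_i}(i)`: the intervals `(ρ_i, i]` are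
laminar (`ρ_i < h < i` implies `ρ_i ≤ ρ_h`), and `V_i ⊆ V_{ρ_i}` when `ρ_i ≥ 0`. With these,
`V_i` completes a cycle at stage `i` with `reset_{V_i}(i) = ρ_i`. Conversely a cycle `B`
completed at stage `i` contains `U_i`, so `reset_B(i) ≤ ρ_i`; were it smaller, descending along
`ρ_i, ρ_{ρ_i}, …` would give a stage `j` with `reset_B(i) < j < i` and `B ⊆ V_j`, which is
absurd. Hence `B = V_i`.
-/

open Finset

def IsResetAt (n : ℕ) (U : ℕ → Finset ℕ) (i : ℕ) (A : Finset ℕ) : Prop :=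
  ∃ B, B ⊆ Icc 1 n ∧ A ⊆ B ∧ CompletesCycle n U i B

noncomputable def unionIoc (U : ℕ → Finset ℕ) (m : ℤ) (i : ℕ) : Finset ℕ :=
  ((range (i + 1)).filter (fun h : ℕ => m < (h : ℤ))).biUnion U

section unionIoc

variable {U : ℕ → Finset ℕ} {m m' : ℤ} {h i k : ℕ}

lemma mem_unionIoc {x : ℕ} : x ∈ unionIoc U m i ↔ ∃ h : ℕ, m < h ∧ h ≤ i ∧ x ∈ U h := by
  simp only [unionIoc, mem_biUnion, mem_filter, mem_range, Nat.lt_succ_iff]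
  tauto

lemma unionIoc_subset_iff {S : Finset ℕ} :
    unionIoc U m i ⊆ S ↔ ∀ h : ℕ, m < h → h ≤ i → U h ⊆ S := by
  simp only [unionIoc, biUnion_subset, mem_filter, mem_range, Nat.lt_succ_iff]
  tauto

lemma subset_unionIoc (hm : m < h) (hi : h ≤ i) : U h ⊆ unionIoc U m i :=
  fun _ hx => mem_unionIoc.2 ⟨h, hm, hi, hx⟩

lemma unionIoc_mono (hm : m ≤ m') (hi : i ≤ k) : unionIoc U m' i ⊆ unionIoc U m k :=
  unionIoc_subset_iff.2 fun _ hm' hh => subset_unionIoc (hm.trans_lt hm') (hh.trans hi)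

lemma unionIoc_subset_union (t : ℕ) : unionIoc U m k ⊆ unionIoc U m t ∪ unionIoc U t k := by
  refine unionIoc_subset_iff.2 fun h hm hk => ?_
  rcases le_or_gt h t with ht | ht
  · exact (subset_unionIoc hm ht).trans subset_union_left
  · exact (subset_unionIoc (by exact_mod_cast ht) hk).trans subset_union_right

end unionIoc

section reset

variable {n : ℕ} {U : ℕ → Finset ℕ} {i j : ℕ} {A A' B : Finset ℕ}

lemma completesCycle_iff : CompletesCycle n U i B ↔ unionIoc U (resetAux n U i B) i = B :=
  Iff.rfl

lemma V_eq_unionIoc : V n U i = unionIoc U (resetAux n U i (U i)) i := rfl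

lemma IsResetAt.mono (hA : A ⊆ A') (h : IsResetAt n U i A') : IsResetAt n U i A :=
  let ⟨B, hB, hAB, hcyc⟩ := h
  ⟨B, hB, hA.trans hAB, hcyc⟩

lemma resetAux_succ_of_isResetAt (h : IsResetAt n U i A) : resetAux n U (i + 1) A = i := by
  rw [resetAux]
  exact if_pos h

lemma resetAux_succ_of_not_isResetAt (h : ¬IsResetAt n U i A) :
    resetAux n U (i + 1) A = resetAux n U i A := by
  rw [resetAux]
  exact if_neg h

lemma neg_one_le_resetAux (n : ℕ) (U : ℕ → Finset ℕ) (i : ℕ) (A : Finset ℕ) :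
    -1 ≤ resetAux n U i A := by
  induction i with
  | zero => rfl
  | succ i ih =>
    by_cases h : IsResetAt n U i A
    · rw [resetAux_succ_of_isResetAt h]
      omega
    · rwa [resetAux_succ_of_not_isResetAt h]

lemma resetAux_lt (i : ℕ) (A : Finset ℕ) : resetAux n U i A < i := by
  induction i with
  | zero => simp [resetAux]
  | succ i ih =>
    by_cases h : IsResetAt n U i A
    · rw [resetAux_succ_of_isResetAt h]
      omega
    · rw [resetAux_succ_of_not_isResetAt h]
      omega

lemma resetAux_mono (A : Finset ℕ) : Monotone (resetAux n U · A) := by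
  refine monotone_nat_of_le_succ fun i => ?_
  by_cases h : IsResetAt n U i A
  · rw [resetAux_succ_of_isResetAt h]
    exact (resetAux_lt i A).le
  · rw [resetAux_succ_of_not_isResetAt h]

lemma resetAux_anti (hA : A ⊆ A') (i : ℕ) : resetAux n U i A' ≤ resetAux n U i A := by
  induction i with
  | zero => rfl
  | succ i ih =>
    by_cases h : IsResetAt n U i A'
    · rw [resetAux_succ_of_isResetAt h, resetAux_succ_of_isResetAt (h.mono hA)]
    · rw [resetAux_succ_of_not_isResetAt h]
      exact ih.trans (resetAux_mono A i.le_succ)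

lemma isResetAt_of_resetAux_eq (h : resetAux n U i A = j) : IsResetAt n U j A := by
  induction i with
  | zero => simp [resetAux] at h
  | succ i ih =>
    by_cases hi : IsResetAt n U i A
    · rw [resetAux_succ_of_isResetAt hi, Nat.cast_inj] at h
      rwa [← h]
    · rw [resetAux_succ_of_not_isResetAt hi] at h
      exact ih h

lemma le_resetAux_of_isResetAt (h : IsResetAt n U j A) (hj : j < i) :
    (j : ℤ) ≤ resetAux n U i A :=
  (resetAux_succ_of_isResetAt h).symm.le.trans (resetAux_mono A hj)

lemma U_subset_V (i : ℕ) : U i ⊆ V n U i :=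
  subset_unionIoc (resetAux_lt i (U i)) le_rfl

lemma V_subset_Icc (hU : ∀ i, U i ⊆ Icc 1 n) (i : ℕ) : V n U i ⊆ Icc 1 n :=
  unionIoc_subset_iff.2 fun h _ _ => hU h

end reset

lemma exists_unionIoc_subset_V {n : ℕ} {U : ℕ → Finset ℕ} {t k : ℕ}
    (hnest : ∀ s ≤ t, ∀ r : ℕ, resetAux n U s (U s) = r → V n U s ⊆ V n U r)
    {m : ℤ} (hm : -1 ≤ m) (hmt : m < t) (ht : unionIoc U t k ⊆ V n U t) :
    ∃ s : ℕ, m < s ∧ s ≤ t ∧ unionIoc U m k ⊆ V n U s := by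
  induction t using Nat.strong_induction_on with
  | _ t ih =>
    have hsplit : unionIoc U (resetAux n U t (U t)) k ⊆ V n U t :=
      (unionIoc_subset_union t).trans (union_subset subset_rfl ht)
    by_cases hle : resetAux n U t (U t) ≤ m
    · exact ⟨t, hmt, le_rfl, (unionIoc_mono hle le_rfl).trans hsplit⟩
    obtain ⟨s, hs⟩ := Int.eq_ofNat_of_zero_le (show 0 ≤ resetAux n U t (U t) by omega)
    have hst : s < t := by exact_mod_cast hs ▸ resetAux_lt t (U t)
    rw [hs] at hsplit hle
    obtain ⟨s', hms', hs't, hsub⟩ := ih s hst (fun s'' hs'' => hnest s'' (by omega))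
      (by omega) (hsplit.trans (hnest t le_rfl s hs))
    exact ⟨s', hms', by omega, hsub⟩

def ResetIffSubsetV (n : ℕ) (U : ℕ → Finset ℕ) (i : ℕ) : Prop :=
  ∀ A ⊆ Icc 1 n, IsResetAt n U i A ↔ A ⊆ V n U i

section induction

variable {n : ℕ} {U : ℕ → Finset ℕ} {i : ℕ} (hchar : ∀ j < i, ResetIffSubsetV n U j)
include hchar

lemma subset_V_of_resetAux_eq {j : ℕ} {A : Finset ℕ} (hA : A ⊆ Icc 1 n)
    (h : resetAux n U i A = j) : A ⊆ V n U j :=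
  have hj : j < i := by exact_mod_cast h ▸ resetAux_lt i A
  (hchar j hj A hA).1 (isResetAt_of_resetAux_eq h)

variable (hU : ∀ i, U i ⊆ Icc 1 n)
include hU

lemma le_resetAux_of_subset_V {j : ℕ} {A : Finset ℕ} (hj : j < i) (hA : A ⊆ V n U j) :
    (j : ℤ) ≤ resetAux n U i A :=
  le_resetAux_of_isResetAt ((hchar j hj A (hA.trans (V_subset_Icc hU j))).2 hA) hj

lemma resetAux_le_resetAux_of_lt
    (hlam : ∀ j < i, ∀ h < j, resetAux n U j (U j) < h →
      resetAux n U j (U j) ≤ resetAux n U h (U h))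
    (h : ℕ) (hh : h < i) (hlt : resetAux n U i (U i) < h) :
    resetAux n U i (U i) ≤ resetAux n U h (U h) := by
  by_contra! hgt
  obtain ⟨r, hr⟩ := Int.eq_ofNat_of_zero_le
    (show 0 ≤ resetAux n U i (U i) by have := neg_one_le_resetAux n U h (U h); omega)
  have hrh : r < h := by omega
  have hVr : V n U r ⊆ V n U h :=
    unionIoc_mono (hlam h hh r hrh (by omega)) hrh.le
  have hUi : U i ⊆ V n U r := subset_V_of_resetAux_eq hchar (hU i) hr
  have := le_resetAux_of_subset_V hchar hU hh (hUi.trans hVr)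
  omega

lemma V_subset_V_resetAux
    (hnest : ∀ j < i, ∀ r : ℕ, resetAux n U j (U j) = r → V n U j ⊆ V n U r)
    (hlam : ∀ h < i, resetAux n U i (U i) < h → resetAux n U i (U i) ≤ resetAux n U h (U h))
    (r : ℕ) (hr : resetAux n U i (U i) = r) : V n U i ⊆ V n U r := by
  have hV : ∀ h, h < i → (r : ℤ) < h → V n U h ⊆ V n U r := by
    intro h
    induction h using Nat.strong_induction_on with
    | _ h ih =>
      intro hh hrh
      have hle := hlam h hh (hr ▸ hrh)
      obtain ⟨s, hs⟩ := Int.eq_ofNat_of_zero_le (show 0 ≤ resetAux n U h (U h) by omega)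
      rcases (show r ≤ s by omega).eq_or_lt with rfl | hrs
      · exact hnest h hh r hs
      · have hsh : s < h := by exact_mod_cast hs ▸ resetAux_lt h (U h)
        exact (hnest h hh s hs).trans (ih s hsh (by omega) (by exact_mod_cast hrs))
  refine unionIoc_subset_iff.2 fun h hrh hhi => ?_
  rcases hhi.lt_or_eq with hhi | rfl
  · exact (U_subset_V h).trans (hV h hhi (hr ▸ hrh))
  · exact subset_V_of_resetAux_eq hchar (hU h) hr

lemma resetAux_V_eq
    (hnest : ∀ r : ℕ, resetAux n U i (U i) = r → V n U i ⊆ V n U r) :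
    resetAux n U i (V n U i) = resetAux n U i (U i) := by
  refine le_antisymm (resetAux_anti (U_subset_V i) i) ?_
  rcases (neg_one_le_resetAux n U i (U i)).eq_or_lt with h | h
  · exact h ▸ neg_one_le_resetAux n U i _
  obtain ⟨r, hr⟩ := Int.eq_ofNat_of_zero_le (show 0 ≤ resetAux n U i (U i) by omega)
  rw [hr]
  exact le_resetAux_of_subset_V hchar hU (by exact_mod_cast hr ▸ resetAux_lt i (U i))
    (hnest r hr)

lemma resetIffSubsetV_of_lt
    (hnest : ∀ s ≤ i, ∀ r : ℕ, resetAux n U s (U s) = r → V n U s ⊆ V n U r) :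
    ResetIffSubsetV n U i := by
  intro A _
  constructor
  · rintro ⟨B, -, hAB, hcyc⟩
    rw [completesCycle_iff] at hcyc
    suffices resetAux n U i B = resetAux n U i (U i) by rwa [V_eq_unionIoc, ← this, hcyc]
    have hUB : U i ⊆ B := hcyc ▸ subset_unionIoc (resetAux_lt i B) le_rfl
    refine le_antisymm (resetAux_anti hUB i) ?_
    by_contra! hlt
    have hB1 := neg_one_le_resetAux n U i B
    obtain ⟨r, hr⟩ := Int.eq_ofNat_of_zero_le (show 0 ≤ resetAux n U i (U i) by omega)
    have hri : r < i := by exact_mod_cast hr ▸ resetAux_lt i (U i)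
    obtain ⟨s, hms, hsr, hsub⟩ := exists_unionIoc_subset_V (k := i)
      (fun s hs => hnest s (by omega)) hB1 (hr ▸ hlt) (hr ▸ hnest i le_rfl r hr)
    rw [hcyc] at hsub
    have := le_resetAux_of_subset_V hchar hU (by omega) hsub
    omega
  · intro hAV
    refine ⟨V n U i, V_subset_Icc hU i, hAV, ?_⟩
    rw [completesCycle_iff, resetAux_V_eq hchar hU (hnest i le_rfl), V_eq_unionIoc]

end induction

theorem resetIffSubsetV_and_nested {n : ℕ} {U : ℕ → Finset ℕ} (hU : ∀ i, U i ⊆ Icc 1 n)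
    (i : ℕ) :
    ResetIffSubsetV n U i ∧
      (∀ r : ℕ, resetAux n U i (U i) = r → V n U i ⊆ V n U r) ∧
      (∀ h < i, resetAux n U i (U i) < h → resetAux n U i (U i) ≤ resetAux n U h (U h)) := by
  induction i using Nat.strong_induction_on with
  | _ i ih =>
    have hchar j hj := (ih j hj).1
    have hlam := resetAux_le_resetAux_of_lt hchar hU fun j hj => (ih j hj).2.2
    have hnest := V_subset_V_resetAux hchar hU (fun j hj => (ih j hj).2.1) hlam
    refine ⟨resetIffSubsetV_of_lt hchar hU fun s hs => ?_, hnest, hlam⟩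
    rcases hs.lt_or_eq with hs | rfl
    · exact (ih s hs).2.1
    · exact hnest

/-- for every `i` and every `A ⊆ {1,…,n}`, `A` is reset at stage `i` (i.e. some
`B ⊆ {1,…,n}` with `B ⊇ A` completes a cycle at stage `i`, the first clause of the recursion
defining `reset_A(i+1) = i`) if and only if `A ⊆ V_i`. -/
theorem stmt_13 (n : ℕ) (U : ℕ → Finset ℕ) (hU : ∀ i, U i ⊆ Finset.Icc 1 n) :
    ∀ i (A : Finset ℕ), A ⊆ Finset.Icc 1 n →
      ((∃ B, B ⊆ Finset.Icc 1 n ∧ A ⊆ B ∧ CompletesCycle n U i B) ↔ A ⊆ V n U i) :=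
  fun i => (resetIffSubsetV_and_nested hU i).1
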